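/- Truth-theoretic semantics of the possessive object relative clause 'Possessor whose Object Subject Verb': with poss = χ_P, sbj = χ_K, obj = χ_L, verb = ∑_{i,j ∈ U} α(i,j) • (e_i ⊗ e_j) ∈ N ⊗ N, and 's : N → N the linear map with 's(e_l) = ∑_{h ∈ U, owns(h,l)} e_h, the vector μ( poss ⊗ 's( μ( (ε ⊗ id_N)(sbj ⊗ verb) ⊗ obj ) ) ) equals ∑_{h ∈ P} ( ∑_{l ∈ L} ∑_{k ∈ K} (if owns(h,l) then α(k,l) else 0) ) • e_h. -/
import Mathlib


open TensorProduct

noncomputable def eVec (U : Type*) [DecidableEq U] (i : U) : U → ℝ := Pi.single i 1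

noncomputable def muMap (U : Type*) :
    (U → ℝ) ⊗[ℝ] (U → ℝ) →ₗ[ℝ] (U → ℝ) :=
  TensorProduct.lift (LinearMap.mul ℝ (U → ℝ))

noncomputable def epsMap (U : Type*) [Fintype U] :
    (U → ℝ) ⊗[ℝ] (U → ℝ) →ₗ[ℝ] ℝ :=
  TensorProduct.lift (LinearMap.mk₂ ℝ (fun v w => ∑ i, v i * w i)
    (fun v v' w => by simp [add_mul, Finset.sum_add_distrib])
    (fun c v w => by simp [Finset.mul_sum, mul_assoc])
    (fun v w w' => by simp [mul_add, Finset.sum_add_distrib])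
    (fun c v w => by simp [Finset.mul_sum, mul_left_comm]))

noncomputable def deltaMap (U : Type*) [Fintype U] [DecidableEq U] :
    (U → ℝ) →ₗ[ℝ] (U → ℝ) ⊗[ℝ] (U → ℝ) where
  toFun v := ∑ i, v i • (eVec U i ⊗ₜ[ℝ] eVec U i)
  map_add' v w := by simp [add_smul, Finset.sum_add_distrib]
  map_smul' c v := by simp [smul_smul, Finset.smul_sum]

noncomputable def iotaMap (U : Type*) [Fintype U] : (U → ℝ) →ₗ[ℝ] ℝ where
  toFun v := ∑ i, v i
  map_add' v w := by simp [Finset.sum_add_distrib]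
  map_smul' c v := by simp [Finset.mul_sum]

noncomputable def etaMap (U : Type*) [Fintype U] [DecidableEq U] :
    ℝ →ₗ[ℝ] (U → ℝ) ⊗[ℝ] (U → ℝ) :=
  LinearMap.toSpanSingleton ℝ _ (∑ i, eVec U i ⊗ₜ[ℝ] eVec U i)

noncomputable def zetaMap (U : Type*) [Fintype U] [DecidableEq U] :
    ℝ →ₗ[ℝ] (U → ℝ) :=
  LinearMap.toSpanSingleton ℝ _ (∑ i, eVec U i)

lemma muMap_tmul (U : Type*) (v w : U → ℝ) : muMap U (v ⊗ₜ[ℝ] w) = v * w := rfl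

lemma epsMap_tmul (U : Type*) [Fintype U] (v w : U → ℝ) :
    epsMap U (v ⊗ₜ[ℝ] w) = ∑ i, v i * w i := rfl

lemma eVec_mul (U : Type*) [DecidableEq U] (i j : U) :
    eVec U i * eVec U j = if i = j then eVec U i else 0 := by
  ext x
  by_cases h : i = j <;> simp [eVec, Pi.single_apply, h] <;> aesop

lemma eps_eVec (U : Type*) [Fintype U] [DecidableEq U] (i j : U) :
    epsMap U (eVec U i ⊗ₜ[ℝ] eVec U j) = if i = j then 1 else 0 := by
  rw [epsMap_tmul]
  simp [eVec, Pi.single_apply, Finset.sum_ite_eq, eq_comm]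

set_option synthInstance.maxHeartbeats 1000000 in
set_option maxHeartbeats 1000000 in
/-- truth-theoretic semantics of the possessive object relative
    clause `Possessor whose Object Subject Verb`:
    μ( poss ⊗ 's( μ( (ε ⊗ id_N)(sbj ⊗ verb) ⊗ obj ) ) )
      = ∑_{h ∈ P} ( ∑_{l ∈ L} ∑_{k ∈ K} (if owns(h,l) then α(k,l) else 0) ) • e_h. -/
theorem possessive_object_semantics (U : Type*) [Fintype U] [DecidableEq U]
    (P K L : Finset U) (α : U × U → ℝ) (owns : U → U → Prop) [DecidableRel owns]
    (possS : (U → ℝ) →ₗ[ℝ] (U → ℝ))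
    (hpossS : ∀ l : U, possS (eVec U l)
      = ∑ h ∈ Finset.univ.filter (fun h => owns h l), eVec U h) :
    muMap U ((∑ h ∈ P, eVec U h) ⊗ₜ[ℝ]
      possS (muMap U
        (((TensorProduct.lid ℝ (U → ℝ))
            ((LinearMap.rTensor (U → ℝ) (epsMap U))
              ((TensorProduct.assoc ℝ (U → ℝ) (U → ℝ) (U → ℝ)).symm
                ((∑ k ∈ K, eVec U k) ⊗ₜ[ℝ]
                  (∑ i : U, ∑ j : U, α (i, j) • (eVec U i ⊗ₜ[ℝ] eVec U j)))))) ⊗ₜ[ℝ]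
          (∑ l ∈ L, eVec U l))))
    = ∑ h ∈ P, (∑ l ∈ L, ∑ k ∈ K, if owns h l then α (k, l) else 0) • eVec U h := by
  simp only [tmul_sum, sum_tmul, map_sum, tmul_smul, smul_tmul', map_smul,
    TensorProduct.assoc_symm_tmul, LinearMap.rTensor_tmul, eps_eVec, TensorProduct.lid_tmul,
    LinearMap.id_coe, id_eq, muMap_tmul, eVec_mul, hpossS]
  simp only [← TensorProduct.smul_tmul', map_smul, eps_eVec, smul_eq_mul, smul_mul_assoc,
    eVec_mul, mul_ite, mul_one, mul_zero, ite_smul, zero_smul, smul_ite, smul_zero,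
    Finset.sum_ite_eq, Finset.sum_ite_eq', Finset.mem_univ, if_true, hpossS]
  simp only [ite_mul, zero_mul, smul_mul_assoc, eVec_mul, apply_ite possS, map_zero, map_smul,
    hpossS, smul_ite, smul_zero, ite_smul, zero_smul, Finset.mul_sum, Finset.smul_sum]
  ext u
  simp only [Finset.sum_apply, Pi.mul_apply, Pi.smul_apply, smul_eq_mul, eVec, Pi.single_apply,
    ite_mul, one_mul, zero_mul, mul_ite, mul_zero, mul_one, Finset.sum_ite_eq, Finset.sum_ite_eq',
    Finset.mem_univ, if_true, apply_ite, Finset.sum_ite_irrel, Finset.sum_const_zero,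
    Finset.mem_filter, true_and]
  simp [Pi.single_apply, mul_ite, ite_mul, Finset.sum_ite_eq, Finset.sum_ite_eq',
    Finset.mul_sum, Finset.sum_comm (s := L)]
  simp [apply_ite (fun f : U → ℝ => f u), Pi.single_apply, mul_ite, ite_mul,
    Finset.sum_ite_eq, Finset.sum_ite_eq', Finset.mem_filter]
  split_ifs with h
  · rw [Finset.sum_comm]
    refine Finset.sum_congr rfl fun x hx => ?_
    split_ifs with h2 <;> simp [h, h2]
  · simp [h]
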